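/- arXiv:2402.06369 — 3 statements merged into one kernel-verified Lean document; each statement's English description precedes it below -/
import Mathlib

section
/- Let X be a real Banach space, θ = (k_r) a lacunary sequence, and ∑ x_i a series in X. The following are equivalent: (1) ∑ x_i is weakly unconditionally Cauchy; (2) the space S_{S_θ}(∑ x_i) = {(a_i) ∈ ℓ_∞ : the partial sums of ∑ a_i x_i are S_θ-summable}, endowed with the supremum norm, is complete; (3) c_0 ⊆ S_{S_θ}(∑ x_i), i.e. for every sequence (a_i) of reals converging to 0, the sequence of partial sums S_k = ∑_{i=1}^k a_i x_i is lacunary statistically convergent to some L ∈ X. -/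
open Filter Finset
open scoped Classical

/-- `θ` is a lacunary sequence: `θ 0 = 0`, `θ` is strictly increasing and
`h_r = θ (r+1) - θ r → ∞`.  (Intervals `I_r = (θ r, θ (r+1)]`.) -/
def IsLacunary (θ : ℕ → ℕ) : Prop :=
  θ 0 = 0 ∧ StrictMono θ ∧ Tendsto (fun r => θ (r + 1) - θ r) atTop atTop

/-- `x` is strongly lacunary (`N_θ`) summable to `L`. -/
def NthetaSummable {X : Type*} [NormedAddCommGroup X] (θ : ℕ → ℕ) (x : ℕ → X) (L : X) : Prop :=
  Tendsto (fun r => (1 / (θ (r + 1) - θ r : ℝ)) * ∑ k ∈ Finset.Ioc (θ r) (θ (r + 1)), ‖x k - L‖)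
    atTop (nhds 0)

/-- `x` is lacunary statistically (`S_θ`) convergent to `L`. -/
def SthetaConvergent {X : Type*} [NormedAddCommGroup X] (θ : ℕ → ℕ) (x : ℕ → X) (L : X) : Prop :=
  ∀ ε > (0 : ℝ),
    Tendsto (fun r => (1 / (θ (r + 1) - θ r : ℝ)) *
      (((Finset.Ioc (θ r) (θ (r + 1))).filter (fun k => ε ≤ ‖x k - L‖)).card : ℝ))
      atTop (nhds 0)

/-- The series `∑ x i` is weakly unconditionally Cauchy: `∑ |f (x i)| < ∞`
for every continuous linear functional `f`. -/
def WUCSeries {X : Type*} [NormedAddCommGroup X] [NormedSpace ℝ X] (x : ℕ → X) : Prop :=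
  ∀ f : X →L[ℝ] ℝ, Summable fun i => |f (x i)|

/-- The `S_θ`-summability space of the series `∑ x i`, viewed as a subset of `ℓ∞`
(with the supremum norm): bounded scalar sequences `a` for which the partial sums of
`∑ a i • x i` are `S_θ`-convergent to some element of `X`. -/
def SthetaSummabilitySpace {X : Type*} [NormedAddCommGroup X] [NormedSpace ℝ X]
    (θ : ℕ → ℕ) (x : ℕ → X) : Set (lp (fun _ : ℕ => ℝ) ⊤) :=
  {a | ∃ L : X, SthetaConvergent θ (fun n => ∑ i ∈ Finset.range n, a i • x i) L}

/-!
For a wuC series, Banach–Steinhaus applied in the bidual bounds the partial sums uniformly: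
`‖∑_{i<n} a i • x i‖ ≤ C ‖a‖_∞`. Since `S_θ`-limits are unique and depend 1-Lipschitz on the
sequence (an `S_θ`-convergent sequence is frequently close to its limit), the summability space is
then closed in `ℓ∞`; and coefficients in `c₀` even give norm-convergent series.

Conversely, if `∑ |f (x i)| = ∞` for some functional `f`, the Abel–Dini coefficients
`a i = sign (f (x i)) / √(1 + ∑_{j ≤ i} |f (x j)|)` tend to `0` while `f` of the partial sums tends
to infinity, which rules out `S_θ`-convergence. As `c₀` lies in the `ℓ∞`-closure of the finitely
supported sequences, which all belong to the summability space, neither completeness nor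
`c₀ ⊆ S_{S_θ}` can hold.
-/

-- `SthetaConvergent θ x L` unfolds to
-- `∀ ε > 0, Tendsto (blockDensity θ (ε ≤ ‖x · - L‖)) atTop (nhds 0)`.
noncomputable def blockDensity (θ : ℕ → ℕ) (p : ℕ → Prop) [DecidablePred p] (r : ℕ) : ℝ :=
  (1 / (θ (r + 1) - θ r : ℝ)) * (((Ioc (θ r) (θ (r + 1))).filter p).card : ℝ)

section BlockDensity

variable {θ : ℕ → ℕ} {p q : ℕ → Prop} [DecidablePred p] [DecidablePred q]

lemma one_div_blockLength_nonneg (hθ : StrictMono θ) (r : ℕ) : 0 ≤ 1 / (θ (r + 1) - θ r : ℝ) :=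
  one_div_nonneg.2 (sub_nonneg.2 (by exact_mod_cast hθ.monotone r.le_succ))

lemma blockDensity_nonneg (hθ : StrictMono θ) (r : ℕ) : 0 ≤ blockDensity θ p r :=
  mul_nonneg (one_div_blockLength_nonneg hθ r) (Nat.cast_nonneg _)

lemma blockDensity_mono (hθ : StrictMono θ) (hpq : ∀ k, p k → q k) (r : ℕ) :
    blockDensity θ p r ≤ blockDensity θ q r := by
  unfold blockDensity
  gcongr
  · exact one_div_blockLength_nonneg hθ r
  · exact hpq _

lemma blockDensity_or_le (hθ : StrictMono θ) (r : ℕ) :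
    blockDensity θ (fun k => p k ∨ q k) r ≤ blockDensity θ p r + blockDensity θ q r := by
  unfold blockDensity
  rw [← mul_add, filter_or]
  gcongr
  · exact one_div_blockLength_nonneg hθ r
  · exact_mod_cast card_union_le _ _

lemma blockDensity_eq_zero {r : ℕ} (h : ∀ k ∈ Ioc (θ r) (θ (r + 1)), ¬ p k) :
    blockDensity θ p r = 0 := by
  simp [blockDensity, filter_false_of_mem h]

lemma blockDensity_eq_one (hθ : StrictMono θ) {r : ℕ} (h : ∀ k ∈ Ioc (θ r) (θ (r + 1)), p k) :
    blockDensity θ p r = 1 := by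
  have hlt : θ r < θ (r + 1) := hθ r.lt_succ_self
  have hpos : (0 : ℝ) < θ (r + 1) - θ r := sub_pos.2 (by exact_mod_cast hlt)
  rw [blockDensity, filter_true_of_mem h, Nat.card_Ioc, Nat.cast_sub hlt.le]
  field_simp

lemma tendsto_blockDensity_zero_of_eventually_not (hθ : StrictMono θ)
    (h : ∀ᶠ k in atTop, ¬ p k) : Tendsto (blockDensity θ p) atTop (nhds 0) := by
  obtain ⟨K, hK⟩ := eventually_atTop.1 h
  refine tendsto_const_nhds.congr' ?_
  filter_upwards [hθ.tendsto_atTop.eventually_ge_atTop K] with r hr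
  exact (blockDensity_eq_zero fun k hk => hK k (hr.trans (mem_Ioc.1 hk).1.le)).symm

lemma frequently_not_of_tendsto_blockDensity_zero (hθ : StrictMono θ)
    (h : Tendsto (blockDensity θ p) atTop (nhds 0)) : ∃ᶠ k in atTop, ¬ p k := by
  intro hp
  obtain ⟨K, hK⟩ := eventually_atTop.1 hp
  have hone : Tendsto (blockDensity θ p) atTop (nhds 1) := by
    refine tendsto_const_nhds.congr' ?_
    filter_upwards [hθ.tendsto_atTop.eventually_ge_atTop K] with r hr
    exact (blockDensity_eq_one hθ fun k hk => not_not.1 (hK k (hr.trans (mem_Ioc.1 hk).1.le))).symm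
  exact one_ne_zero (tendsto_nhds_unique hone h)

lemma tendsto_blockDensity_zero_of_imp (hθ : StrictMono θ) (hpq : ∀ k, p k → q k)
    (hq : Tendsto (blockDensity θ q) atTop (nhds 0)) :
    Tendsto (blockDensity θ p) atTop (nhds 0) :=
  squeeze_zero (blockDensity_nonneg hθ) (blockDensity_mono hθ hpq) hq

lemma tendsto_blockDensity_or (hθ : StrictMono θ) (hp : Tendsto (blockDensity θ p) atTop (nhds 0))
    (hq : Tendsto (blockDensity θ q) atTop (nhds 0)) :
    Tendsto (blockDensity θ (fun k => p k ∨ q k)) atTop (nhds 0) :=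
  squeeze_zero (blockDensity_nonneg hθ) (blockDensity_or_le hθ) (by simpa using hp.add hq)

end BlockDensity

section SthetaConvergent

variable {X Y : Type*} [NormedAddCommGroup X] [NormedAddCommGroup Y] {θ : ℕ → ℕ}
  {y : ℕ → X} {z : ℕ → Y} {L : X} {M : Y}

lemma SthetaConvergent.of_tendsto (hθ : StrictMono θ) (h : Tendsto y atTop (nhds L)) :
    SthetaConvergent θ y L := fun ε hε =>
  tendsto_blockDensity_zero_of_eventually_not hθ <| by
    simpa [← dist_eq_norm] using Metric.tendsto_nhds.1 h ε hε

lemma SthetaConvergent.frequently_norm_sub_lt (hθ : StrictMono θ) (h : SthetaConvergent θ y L)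
    {ε : ℝ} (hε : 0 < ε) : ∃ᶠ k in atTop, ‖y k - L‖ < ε := by
  simpa using frequently_not_of_tendsto_blockDensity_zero hθ (h ε hε)

lemma SthetaConvergent.prodMk (hθ : StrictMono θ) (hy : SthetaConvergent θ y L)
    (hz : SthetaConvergent θ z M) : SthetaConvergent θ (fun k => (y k, z k)) (L, M) :=
  fun ε hε => tendsto_blockDensity_zero_of_imp hθ (fun k hk => by simpa [Prod.norm_def] using hk)
    (tendsto_blockDensity_or hθ (hy ε hε) (hz ε hε))

lemma SthetaConvergent.norm_sub_le (hθ : StrictMono θ) {y' : ℕ → X} {L' : X}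
    (hy : SthetaConvergent θ y L) (hy' : SthetaConvergent θ y' L') {d : ℝ}
    (hd : ∀ k, ‖y k - y' k‖ ≤ d) : ‖L - L'‖ ≤ d := by
  refine le_of_forall_pos_le_add fun ε hε => ?_
  obtain ⟨k, hk⟩ := ((hy.prodMk hθ hy').frequently_norm_sub_lt hθ (half_pos hε)).exists
  simp only [Prod.norm_def, Prod.fst_sub, Prod.snd_sub, max_lt_iff] at hk
  calc ‖L - L'‖ = ‖(y k - y' k) - (y k - L) + (y' k - L')‖ := by congr 1; abel
    _ ≤ ‖y k - y' k‖ + ‖y k - L‖ + ‖y' k - L'‖ :=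
      norm_add_le_of_le (_root_.norm_sub_le _ _) le_rfl
    _ ≤ d + ε := by linarith [hd k]

lemma SthetaConvergent.of_forall_approx (hθ : StrictMono θ)
    (h : ∀ ε > (0 : ℝ), ∃ (y' : ℕ → X) (L' : X), SthetaConvergent θ y' L' ∧
      (∀ k, ‖y k - y' k‖ ≤ ε) ∧ ‖L' - L‖ ≤ ε) :
    SthetaConvergent θ y L := by
  intro ε hε
  obtain ⟨y', L', hy', hyy', hL'⟩ := h (ε / 3) (by positivity)
  refine tendsto_blockDensity_zero_of_imp hθ (fun k hk => ?_) (hy' (ε / 3) (by positivity))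
  calc ε / 3 = ε - ε / 3 - ε / 3 := by ring
    _ ≤ ‖y k - L‖ - ‖y k - y' k‖ - ‖L' - L‖ := by linarith [hyy' k]
    _ ≤ ‖y' k - L'‖ := by
      have : y k - L = (y k - y' k) + (y' k - L') + (L' - L) := by abel
      linarith [norm_add₃_le (a := y k - y' k) (b := y' k - L') (c := L' - L), congrArg norm this]

lemma not_sthetaConvergent_of_tendsto_atTop [NormedSpace ℝ X] (hθ : StrictMono θ)
    (f : StrongDual ℝ X) (hf : Tendsto (fun k => f (y k)) atTop atTop) (L : X) :
    ¬ SthetaConvergent θ y L := by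
  intro h
  obtain ⟨k, hclose, hfar⟩ := ((h.frequently_norm_sub_lt hθ one_pos).and_eventually
    (hf.eventually_gt_atTop (f L + ‖f‖))).exists
  have : f (y k) - f L ≤ ‖f‖ := calc
    f (y k) - f L = f (y k - L) := (map_sub f _ _).symm
    _ ≤ ‖f‖ * ‖y k - L‖ := (le_abs_self _).trans (f.le_opNorm _)
    _ ≤ ‖f‖ := mul_le_of_le_one_right (norm_nonneg f) hclose.le
  linarith

end SthetaConvergent

lemma exists_norm_le_of_forall_dual_bounded {𝕜 E ι : Type*} [RCLike 𝕜] [NormedAddCommGroup E]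
    [NormedSpace 𝕜 E] {v : ι → E} (h : ∀ f : StrongDual 𝕜 E, ∃ C, ∀ i, ‖f (v i)‖ ≤ C) :
    ∃ C, ∀ i, ‖v i‖ ≤ C := by
  obtain ⟨C, hC⟩ := banach_steinhaus (g := fun i => NormedSpace.inclusionInDoubleDualLi 𝕜 (v i)) h
  exact ⟨C, fun i => by simpa only [LinearIsometry.norm_map] using hC i⟩

lemma exists_tendsto_zero_tendsto_sum_mul_atTop {t : ℕ → ℝ} (ht : ∀ i, 0 ≤ t i)
    (hs : ¬ Summable t) : ∃ b : ℕ → ℝ, Tendsto b atTop (nhds 0) ∧ (∀ i, 0 ≤ b i) ∧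
      Tendsto (fun n => ∑ i ∈ range n, b i * t i) atTop atTop := by
  set S : ℕ → ℝ := fun n => ∑ i ∈ range n, t i
  set R : ℕ → ℝ := fun n => √(1 + S n)
  have hS : Tendsto S atTop atTop := (not_summable_iff_tendsto_nat_atTop_of_nonneg ht).1 hs
  have hR : Tendsto R atTop atTop :=
    Real.tendsto_sqrt_atTop.comp (tendsto_atTop_add_const_left _ 1 hS)
  have hR_pos : ∀ n, 0 < R n := fun n =>
    Real.sqrt_pos.2 (by linarith [sum_nonneg fun i (_ : i ∈ range n) => ht i])
  -- Abel–Dini: the telescoping sum of `√(1 + S)` bounds `∑ t i / √(1 + S (i + 1))` from below.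
  have hstep : ∀ i, R (i + 1) - R i ≤ (R (i + 1))⁻¹ * t i := fun i => by
    have hsq : R (i + 1) ^ 2 - R i ^ 2 = t i := by
      simp only [R, S, sum_range_succ]
      rw [Real.sq_sqrt, Real.sq_sqrt] <;>
        linarith [sum_nonneg fun j (_ : j ∈ range i) => ht j, ht i]
    have hmono : R i ≤ R (i + 1) := Real.sqrt_le_sqrt (by simp [S, sum_range_succ, ht i])
    rw [← hsq, inv_mul_eq_div, le_div_iff₀ (hR_pos _)]
    nlinarith [hR_pos i]
  refine ⟨fun i => (R (i + 1))⁻¹, tendsto_inv_atTop_zero.comp (hR.comp (tendsto_add_atTop_nat 1)),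
    fun i => (inv_pos.2 (hR_pos _)).le, ?_⟩
  refine tendsto_atTop_mono (fun n => ?_) (tendsto_atTop_add_const_right _ (-R 0) hR)
  rw [← sub_eq_add_neg, ← sum_range_sub R n]
  exact sum_le_sum fun i _ => hstep i

section WUCSeries

variable {X : Type*} [NormedAddCommGroup X] [NormedSpace ℝ X] {x : ℕ → X}

lemma WUCSeries.exists_norm_sum_smul_le (hx : WUCSeries x) :
    ∃ C, 0 ≤ C ∧ ∀ (a : ℕ → ℝ) (δ : ℝ) (n : ℕ), (∀ i, |a i| ≤ δ) →
      ‖∑ i ∈ range n, a i • x i‖ ≤ C * δ := by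
  obtain ⟨C, hC⟩ := exists_norm_le_of_forall_dual_bounded
    (v := fun p : {p : (ℕ → ℝ) × ℕ // ∀ i, |p.1 i| ≤ 1} => ∑ i ∈ range p.1.2, p.1.1 i • x i)
    fun f => ⟨∑' i, |f (x i)|, fun ⟨⟨a, n⟩, ha⟩ => calc
      ‖f (∑ i ∈ range n, a i • x i)‖ ≤ ∑ i ∈ range n, |a i| * |f (x i)| := by
        simpa [abs_mul] using norm_sum_le (range n) fun i => a i * f (x i)
      _ ≤ ∑ i ∈ range n, |f (x i)| :=
        sum_le_sum fun i _ => mul_le_of_le_one_left (abs_nonneg _) (ha i)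
      _ ≤ ∑' i, |f (x i)| := (hx f).sum_le_tsum _ fun i _ => abs_nonneg _⟩
  have hC0 : 0 ≤ C := (norm_nonneg _).trans (hC ⟨(0, 0), by simp⟩)
  refine ⟨C, hC0, fun a δ n ha => ?_⟩
  rcases (abs_nonneg (a 0)).trans (ha 0) |>.eq_or_lt with hδ | hδ
  · have : ∀ i, a i = 0 := fun i => abs_nonpos_iff.1 (hδ ▸ ha i)
    simp [this, ← hδ]
  · have hscaled := hC ⟨(fun i => a i / δ, n), fun i => by
      rw [abs_div, abs_of_pos hδ, div_le_one hδ]; exact ha i⟩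
    have : ∑ i ∈ range n, a i • x i = δ • ∑ i ∈ range n, (a i / δ) • x i := by
      rw [smul_sum]
      exact sum_congr rfl fun i _ => by rw [smul_smul, mul_div_cancel₀ _ hδ.ne']
    rw [this, norm_smul, Real.norm_of_nonneg hδ.le, mul_comm]
    exact mul_le_mul_of_nonneg_right hscaled hδ.le

lemma WUCSeries.cauchySeq_sum_smul (hx : WUCSeries x) {a : ℕ → ℝ}
    (ha : Tendsto a atTop (nhds 0)) : CauchySeq fun n => ∑ i ∈ range n, a i • x i := by
  obtain ⟨C, hC0, hC⟩ := hx.exists_norm_sum_smul_le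
  rw [Metric.cauchySeq_iff']
  intro ε hε
  have hδ : 0 < ε / (C + 1) := by positivity
  obtain ⟨N, hN⟩ := Metric.tendsto_atTop.1 ha _ hδ
  refine ⟨N, fun n hn => ?_⟩
  have htail : ∑ i ∈ range n, a i • x i - ∑ i ∈ range N, a i • x i =
      ∑ i ∈ range n, (if N ≤ i then a i else 0) • x i := by
    simp only [sum_range_sub_sum_range hn, sum_filter, ite_smul, zero_smul]
  rw [dist_eq_norm, htail]
  calc _ ≤ C * (ε / (C + 1)) := hC _ _ n fun i => by
          split_ifs with hi
          · simpa [Real.dist_eq] using (hN i hi).le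
          · simpa using hδ.le
    _ < ε := by rw [mul_div_assoc', div_lt_iff₀ (by positivity)]; nlinarith

lemma WUCSeries.isClosed_sthetaSummabilitySpace [CompleteSpace X] (hx : WUCSeries x)
    {θ : ℕ → ℕ} (hθ : StrictMono θ) : IsClosed (SthetaSummabilitySpace θ x) := by
  obtain ⟨C, hC0, hC⟩ := hx.exists_norm_sum_smul_le
  have hlip : ∀ (v w : lp (fun _ : ℕ => ℝ) ⊤) (k : ℕ),
      ‖∑ i ∈ range k, v i • x i - ∑ i ∈ range k, w i • x i‖ ≤ C * ‖v - w‖ := fun v w k => by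
    rw [← sum_sub_distrib]
    simp_rw [← sub_smul]
    exact hC _ _ k fun i => by
      simpa using lp.norm_apply_le_norm ENNReal.top_ne_zero (v - w) i
  refine IsSeqClosed.isClosed fun u a hu hua => ?_
  choose L hL using hu
  have hL_cauchy : CauchySeq L := by
    have hu_cauchy := hua.cauchySeq
    rw [cauchySeq_iff_tendsto_dist_atTop_0] at hu_cauchy ⊢
    refine squeeze_zero (fun _ => dist_nonneg) (fun p => ?_) (by simpa using hu_cauchy.const_mul C)
    simpa only [dist_eq_norm] using (hL p.1).norm_sub_le hθ (hL p.2) (hlip _ _)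
  obtain ⟨Lim, hLim⟩ := cauchySeq_tendsto_of_complete hL_cauchy
  refine ⟨Lim, SthetaConvergent.of_forall_approx hθ fun ε hε => ?_⟩
  have hua' : Tendsto (fun n => C * ‖a - u n‖) atTop (nhds 0) := by
    simpa [norm_sub_rev] using (tendsto_iff_norm_sub_tendsto_zero.1 hua).const_mul C
  obtain ⟨n, hn, hLn⟩ := ((hua'.eventually (ge_mem_nhds hε)).and
    ((tendsto_iff_norm_sub_tendsto_zero.1 hLim).eventually (ge_mem_nhds hε))).exists
  exact ⟨_, L n, hL n, fun k => (hlip a (u n) k).trans hn, hLn⟩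

lemma exists_tendsto_zero_tendsto_dual_sum_smul_atTop (hx : ¬ WUCSeries x) :
    ∃ a : ℕ → ℝ, Tendsto a atTop (nhds 0) ∧
      ∃ f : StrongDual ℝ X, Tendsto (fun n => f (∑ i ∈ range n, a i • x i)) atTop atTop := by
  simp only [WUCSeries, not_forall] at hx
  obtain ⟨f, hf⟩ := hx
  obtain ⟨b, hb0, hb_nonneg, hb⟩ :=
    exists_tendsto_zero_tendsto_sum_mul_atTop (fun i => abs_nonneg (f (x i))) hf
  -- Signs chosen so that `f` sees only the nonnegative terms `b i * |f (x i)|`.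
  refine ⟨fun i => SignType.sign (f (x i)) * b i, squeeze_zero_norm (fun i => ?_) hb0, f, ?_⟩
  · rw [norm_mul, Real.norm_of_nonneg (hb_nonneg i)]
    refine mul_le_of_le_one_left (hb_nonneg i) ?_
    rcases SignType.sign (f (x i)) with _ | _ | _ <;> simp
  · convert hb using 2 with n
    simp only [map_sum, map_smul, smul_eq_mul]
    exact sum_congr rfl fun i _ => by rw [← sign_mul_self (f (x i))]; ring

lemma exists_sthetaConvergent_of_isClosed {θ : ℕ → ℕ} (hθ : StrictMono θ)
    (hS : IsClosed (SthetaSummabilitySpace θ x)) {a : ℕ → ℝ} (ha : Tendsto a atTop (nhds 0)) :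
    ∃ L : X, SthetaConvergent θ (fun n => ∑ i ∈ range n, a i • x i) L := by
  have ha_mem : Memℓp a ⊤ := memℓp_infty_iff.2 (by simpa using ha.norm.bddAbove_range)
  let U : ℕ → lp (fun _ : ℕ => ℝ) ⊤ := fun n =>
    ⟨(range n : Set ℕ).indicator a, ha_mem.mono' fun i => norm_indicator_le_norm_self _ _⟩
  have hU_mem : ∀ n, U n ∈ SthetaSummabilitySpace θ x := fun n => by
    refine ⟨∑ i ∈ range n, a i • x i, .of_tendsto hθ (tendsto_const_nhds.congr' ?_)⟩
    filter_upwards [eventually_ge_atTop n] with k hk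
    simp only [U, ← Set.indicator_smul_apply_left]
    exact (sum_indicator_subset _ (range_subset_range.2 hk)).symm
  have hU : Tendsto U atTop (nhds ⟨a, ha_mem⟩) := by
    refine Metric.tendsto_atTop.2 fun ε hε => ?_
    obtain ⟨N, hN⟩ := Metric.tendsto_atTop.1 ha (ε / 2) (half_pos hε)
    refine ⟨N, fun n hn => ?_⟩
    rw [dist_eq_norm]
    refine (lp.norm_le_of_forall_le (half_pos hε).le fun i => ?_).trans_lt (half_lt_self hε)
    rw [lp.coeFn_sub, Pi.sub_apply]
    change ‖(range n : Set ℕ).indicator a i - a i‖ ≤ ε / 2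
    by_cases hi : i ∈ range n
    · rw [Set.indicator_of_mem (mem_coe.2 hi), sub_self, norm_zero]
      exact (half_pos hε).le
    · have hNi : N ≤ i := hn.trans (not_lt.1 (mt mem_range.2 hi))
      rw [Set.indicator_of_notMem (mt mem_coe.1 hi), zero_sub, norm_neg, ← dist_zero_right]
      exact (hN i hNi).le
  obtain ⟨L, hL⟩ := hS.mem_of_tendsto hU (Eventually.of_forall hU_mem)
  exact ⟨L, hL⟩

end WUCSeries

/-- Characterization of wuC series via the `S_θ`-summability space. -/
theorem wuc_iff_sthetaSummabilitySpace_complete {X : Type*} [NormedAddCommGroup X]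
    [NormedSpace ℝ X] [CompleteSpace X] (θ : ℕ → ℕ) (hθ : IsLacunary θ) (x : ℕ → X) :
    (WUCSeries x ↔ IsComplete (SthetaSummabilitySpace θ x)) ∧
    (WUCSeries x ↔ ∀ a : ℕ → ℝ, Tendsto a atTop (nhds 0) →
      ∃ L : X, SthetaConvergent θ (fun n => ∑ i ∈ Finset.range n, a i • x i) L) := by
  have hθ' : StrictMono θ := hθ.2.1
  have of_not_wuc : ¬ WUCSeries x → ∃ a : ℕ → ℝ, Tendsto a atTop (nhds 0) ∧
      ∀ L, ¬ SthetaConvergent θ (fun n => ∑ i ∈ range n, a i • x i) L := fun hx => by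
    obtain ⟨a, ha, f, hf⟩ := exists_tendsto_zero_tendsto_dual_sum_smul_atTop hx
    exact ⟨a, ha, not_sthetaConvergent_of_tendsto_atTop hθ' f hf⟩
  refine ⟨⟨fun hx => (hx.isClosed_sthetaSummabilitySpace hθ').isComplete, fun hc => ?_⟩,
    ⟨fun hx a ha => ?_, fun hc0 => ?_⟩⟩
  · by_contra hx
    obtain ⟨a, ha, hbad⟩ := of_not_wuc hx
    obtain ⟨L, hL⟩ := exists_sthetaConvergent_of_isClosed hθ' hc.isClosed ha
    exact hbad L hL
  · obtain ⟨L, hL⟩ := cauchySeq_tendsto_of_complete (hx.cauchySeq_sum_smul ha)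
    exact ⟨L, .of_tendsto hθ' hL⟩
  · by_contra hx
    obtain ⟨a, ha, hbad⟩ := of_not_wuc hx
    obtain ⟨L, hL⟩ := hc0 a ha
    exact hbad L hL
end

section
/- Let X be a real normed vector space and θ = (k_r) a lacunary sequence. Then X is complete (i.e. a Banach space) if and only if for every weakly unconditionally Cauchy series ∑ x_i in X, the space S_{N_θ}(∑ x_i) = {(a_i) ∈ ℓ_∞ : the partial sums of ∑ a_i x_i are N_θ-summable}, endowed with the supremum norm, is complete. -/
/-!
If `X` is complete and `∑ xᵢ` is wuC, the uniform boundedness principle (applied on the dual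
space, which is always complete) bounds the partial-sum operators `b ↦ ∑_{i<n} bᵢ xᵢ` on `ℓ∞`
uniformly in `n`. So coefficients converging in `ℓ∞` give uniformly converging partial sums,
whose `N_θ`-limits then form a Cauchy sequence; its limit is the `N_θ`-limit for the limit
coefficients. Thus `S_{N_θ}(∑ xᵢ)` is closed in the Banach space `ℓ∞`.

Conversely, `S_{N_θ}(∑ xᵢ)` always contains the finitely supported sequences, hence if closed
it contains `c₀`. Given `(uₙ)` with `‖uₙ₊₁ - uₙ‖ ≤ 4⁻ⁿ`, the series `xₙ = 2ⁿ (uₙ₊₁ - uₙ)` is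
absolutely summable, hence wuC, and the coefficients `2⁻ⁿ ∈ c₀` give the partial sums
`uₙ - u₀`. These are therefore `N_θ`-summable, and for a Cauchy sequence the `N_θ`-limit is
the ordinary limit, so `(uₙ)` converges.
-/

open Filter Finset
open scoped Classical

/-- The `N_θ`-summability space of the series `∑ x i`, viewed as a subset of `ℓ∞`
(with the supremum norm): bounded scalar sequences `a` for which the partial sums of
`∑ a i • x i` are `N_θ`-summable to some element of `X`. -/
def NthetaSummabilitySpace {X : Type*} [NormedAddCommGroup X] [NormedSpace ℝ X]
    (θ : ℕ → ℕ) (x : ℕ → X) : Set (lp (fun _ : ℕ => ℝ) ⊤) :=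
  {a | ∃ L : X, NthetaSummable θ (fun n => ∑ i ∈ Finset.range n, a i • x i) L}

open Topology

section BlockAverage

variable {θ : ℕ → ℕ}

noncomputable def blockAvg (θ : ℕ → ℕ) (u : ℕ → ℝ) (r : ℕ) : ℝ :=
  (1 / (θ (r + 1) - θ r : ℝ)) * ∑ k ∈ Ioc (θ r) (θ (r + 1)), u k

theorem nthetaSummable_iff_tendsto_blockAvg {X : Type*} [NormedAddCommGroup X] {x : ℕ → X}
    {L : X} : NthetaSummable θ x L ↔ Tendsto (blockAvg θ fun k => ‖x k - L‖) atTop (𝓝 0) :=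
  Iff.rfl

theorem blockAvg_add (u v : ℕ → ℝ) (r : ℕ) :
    blockAvg θ (fun k => u k + v k) r = blockAvg θ u r + blockAvg θ v r := by
  simp only [blockAvg, sum_add_distrib, mul_add]

theorem blockAvg_const (hθ : StrictMono θ) (c : ℝ) (r : ℕ) : blockAvg θ (fun _ => c) r = c := by
  have hlen : (θ r : ℝ) < θ (r + 1) := Nat.cast_lt.mpr (hθ r.lt_succ_self)
  rw [blockAvg, sum_const, Nat.card_Ioc, nsmul_eq_mul, Nat.cast_sub (hθ r.lt_succ_self).le]
  field_simp [sub_ne_zero.mpr hlen.ne']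

theorem blockAvg_mono (hθ : StrictMono θ) {u v : ℕ → ℝ} {r : ℕ}
    (h : ∀ k ∈ Ioc (θ r) (θ (r + 1)), u k ≤ v k) : blockAvg θ u r ≤ blockAvg θ v r := by
  have hlen : (θ r : ℝ) < θ (r + 1) := Nat.cast_lt.mpr (hθ r.lt_succ_self)
  exact mul_le_mul_of_nonneg_left (sum_le_sum h) (by rw [one_div_nonneg]; linarith)

theorem le_blockAvg_of_forall_le (hθ : StrictMono θ) {u : ℕ → ℝ} {c : ℝ} {r : ℕ}
    (h : ∀ k ∈ Ioc (θ r) (θ (r + 1)), c ≤ u k) : c ≤ blockAvg θ u r :=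
  blockAvg_const hθ c r ▸ blockAvg_mono hθ h

theorem blockAvg_le_of_forall_le (hθ : StrictMono θ) {u : ℕ → ℝ} {c : ℝ} {r : ℕ}
    (h : ∀ k ∈ Ioc (θ r) (θ (r + 1)), u k ≤ c) : blockAvg θ u r ≤ c :=
  blockAvg_const hθ c r ▸ blockAvg_mono hθ h

theorem blockAvg_le_add_of_forall_le (hθ : StrictMono θ) {u v : ℕ → ℝ} {c : ℝ} {r : ℕ}
    (h : ∀ k ∈ Ioc (θ r) (θ (r + 1)), u k ≤ v k + c) : blockAvg θ u r ≤ blockAvg θ v r + c := by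
  calc blockAvg θ u r ≤ blockAvg θ (fun k => v k + c) r := blockAvg_mono hθ h
    _ = blockAvg θ v r + c := by rw [blockAvg_add, blockAvg_const hθ]

theorem eventually_forall_mem_Ioc (hθ : StrictMono θ) {P : ℕ → Prop}
    (h : ∀ᶠ k in atTop, P k) : ∀ᶠ r in atTop, ∀ k ∈ Ioc (θ r) (θ (r + 1)), P k := by
  obtain ⟨N, hN⟩ := eventually_atTop.mp h
  filter_upwards [eventually_ge_atTop N] with r hr k hk
  exact hN k (hr.trans (hθ.le_apply.trans (mem_Ioc.mp hk).1.le))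

theorem tendsto_blockAvg (hθ : StrictMono θ) {u : ℕ → ℝ} {c : ℝ}
    (hu : Tendsto u atTop (𝓝 c)) : Tendsto (blockAvg θ u) atTop (𝓝 c) := by
  refine Metric.tendsto_nhds.mpr fun ε hε => ?_
  filter_upwards [eventually_forall_mem_Ioc hθ (Metric.tendsto_nhds.mp hu (ε / 2) (half_pos hε))]
    with r hr
  have hr' : ∀ k ∈ Ioc (θ r) (θ (r + 1)), u k - c < ε / 2 ∧ c - u k < ε / 2 :=
    fun k hk => abs_sub_lt_iff.mp (hr k hk)
  have hlo := le_blockAvg_of_forall_le hθ fun k hk => (by linarith [hr' k hk] : c - ε / 2 ≤ u k)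
  have hhi := blockAvg_le_of_forall_le hθ fun k hk => (by linarith [hr' k hk] : u k ≤ c + ε / 2)
  rw [Real.dist_eq, abs_sub_lt_iff]
  constructor <;> linarith

end BlockAverage

namespace NthetaSummable

variable {X : Type*} [NormedAddCommGroup X] {θ : ℕ → ℕ}

theorem of_tendsto (hθ : StrictMono θ) {x : ℕ → X} {L : X} (hx : Tendsto x atTop (𝓝 L)) :
    NthetaSummable θ x L :=
  tendsto_blockAvg hθ (tendsto_iff_norm_sub_tendsto_zero.mp hx)

theorem norm_sub_le (hθ : StrictMono θ) {x y : ℕ → X} {L M : X} {c : ℝ}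
    (hx : NthetaSummable θ x L) (hy : NthetaSummable θ y M) (hxy : ∀ k, ‖x k - y k‖ ≤ c) :
    ‖L - M‖ ≤ c := by
  have hle : ∀ r, ‖L - M‖ - c ≤
      blockAvg θ (fun k => ‖x k - L‖) r + blockAvg θ (fun k => ‖y k - M‖) r := fun r => by
    rw [← blockAvg_add]
    refine le_blockAvg_of_forall_le hθ fun k _ => ?_
    calc ‖L - M‖ - c ≤ ‖x k - L‖ + ‖x k - M‖ - c := by
          linarith [norm_sub_le_norm_sub_add_norm_sub L (x k) M, norm_sub_rev L (x k)]
      _ ≤ ‖x k - L‖ + ‖y k - M‖ := by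
          linarith [norm_sub_le_norm_sub_add_norm_sub (x k) (y k) M, hxy k]
  have hsum := (nthetaSummable_iff_tendsto_blockAvg.mp hx).add hy
  rw [add_zero] at hsum
  have := le_of_tendsto_of_tendsto' tendsto_const_nhds hsum hle
  linarith

theorem of_tendstoUniformly {ι : Type*} {p : Filter ι} [p.NeBot] (hθ : StrictMono θ)
    {s : ι → ℕ → X} {L : ι → X} {x : ℕ → X} {M : X} (hs : ∀ m, NthetaSummable θ (s m) (L m))
    (hsx : TendstoUniformly s x p) (hLM : Tendsto L p (𝓝 M)) : NthetaSummable θ x M := by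
  simp only [nthetaSummable_iff_tendsto_blockAvg] at hs ⊢
  refine Metric.tendsto_nhds.mpr fun ε hε => ?_
  obtain ⟨m, hm, hLm⟩ := ((Metric.tendstoUniformly_iff.mp hsx (ε / 3) (by positivity)).and
    (Metric.tendsto_nhds.mp hLM (ε / 3) (by positivity))).exists
  filter_upwards [Metric.tendsto_nhds.mp (hs m) (ε / 3) (by positivity)] with r hr
  have hbound : blockAvg θ (fun k => ‖x k - M‖) r ≤
      blockAvg θ (fun k => ‖s m k - L m‖) r + (ε / 3 + ε / 3) := by
    refine blockAvg_le_add_of_forall_le hθ fun k _ => ?_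
    have h1 := hm k
    rw [dist_eq_norm] at h1 hLm
    linarith [norm_sub_le_norm_sub_add_norm_sub (x k) (s m k) M,
      norm_sub_le_norm_sub_add_norm_sub (s m k) (L m) M]
  have hnonneg : 0 ≤ blockAvg θ (fun k => ‖x k - M‖) r :=
    le_blockAvg_of_forall_le hθ fun k _ => norm_nonneg _
  rw [Real.dist_eq, sub_zero, abs_of_nonneg hnonneg]
  rw [Real.dist_eq, sub_zero] at hr
  linarith [le_abs_self (blockAvg θ (fun k => ‖s m k - L m‖) r)]

theorem cauchySeq_of_tendstoUniformly (hθ : StrictMono θ) {s : ℕ → ℕ → X} {L : ℕ → X}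
    {x : ℕ → X} (hs : ∀ m, NthetaSummable θ (s m) (L m)) (hsx : TendstoUniformly s x atTop) :
    CauchySeq L := by
  refine Metric.cauchySeq_iff.mpr fun ε hε => ?_
  obtain ⟨N, hN⟩ := eventually_atTop.mp (Metric.tendstoUniformly_iff.mp hsx (ε / 3) (by positivity))
  refine ⟨N, fun m hm n hn => ?_⟩
  have hmn : ∀ k, ‖s m k - s n k‖ ≤ 2 * (ε / 3) := fun k => by
    have h1 := hN m hm k
    have h2 := hN n hn k
    rw [dist_eq_norm] at h1 h2
    linarith [norm_sub_le_norm_sub_add_norm_sub (s m k) (x k) (s n k), norm_sub_rev (x k) (s m k)]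
  rw [dist_eq_norm]
  linarith [norm_sub_le hθ (hs m) (hs n) hmn]

theorem tendsto_of_cauchySeq (hθ : StrictMono θ) {x : ℕ → X} {L : X}
    (hL : NthetaSummable θ x L) (hx : CauchySeq x) : Tendsto x atTop (𝓝 L) := by
  refine Metric.tendsto_atTop.mpr fun ε hε => ?_
  obtain ⟨N, hN⟩ := Metric.cauchySeq_iff.mp hx (ε / 2) (half_pos hε)
  refine ⟨N, fun n hn => ?_⟩
  have hle : ∀ᶠ r in atTop, ‖x n - L‖ - ε / 2 ≤ blockAvg θ (fun k => ‖x k - L‖) r := by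
    filter_upwards [eventually_forall_mem_Ioc hθ (eventually_ge_atTop N)] with r hr
    refine le_blockAvg_of_forall_le hθ fun k hk => ?_
    have := hN n hn k (hr k hk)
    rw [dist_eq_norm] at this
    linarith [norm_sub_le_norm_sub_add_norm_sub (x n) (x k) L]
  have := ge_of_tendsto hL hle
  rw [dist_eq_norm]
  linarith

end NthetaSummable

section PartialSums

variable {X : Type*} [NormedAddCommGroup X] [NormedSpace ℝ X]

noncomputable def partialSumCLM (x : ℕ → X) (n : ℕ) : lp (fun _ : ℕ => ℝ) ⊤ →L[ℝ] X :=
  ∑ i ∈ range n, (lp.evalCLM ℝ (fun _ : ℕ => ℝ) ⊤ i).smulRight (x i)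

@[simp]
theorem partialSumCLM_apply (x : ℕ → X) (n : ℕ) (b : lp (fun _ : ℕ => ℝ) ⊤) :
    partialSumCLM x n b = ∑ i ∈ range n, b i • x i := by
  simp [partialSumCLM, lp.evalCLM]

theorem WUCSeries.of_summable_norm {x : ℕ → X} (hx : Summable fun i => ‖x i‖) : WUCSeries x :=
  fun f => (hx.mul_left ‖f‖).of_nonneg_of_le (fun _ => abs_nonneg _) fun i => by
    simpa only [Real.norm_eq_abs] using f.le_opNorm (x i)

theorem WUCSeries.abs_apply_partialSumCLM_le {x : ℕ → X} (hx : WUCSeries x) (f : X →L[ℝ] ℝ)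
    (n : ℕ) (b : lp (fun _ : ℕ => ℝ) ⊤) :
    |f (partialSumCLM x n b)| ≤ ‖b‖ * ∑' i, |f (x i)| := by
  have hb : ∀ i, |b i| ≤ ‖b‖ := fun i => by
    simpa only [Real.norm_eq_abs] using lp.norm_apply_le_norm ENNReal.top_ne_zero b i
  calc |f (partialSumCLM x n b)| = |∑ i ∈ range n, b i * f (x i)| := by simp
    _ ≤ ∑ i ∈ range n, ‖b‖ * |f (x i)| := by
        refine (abs_sum_le_sum_abs _ _).trans (sum_le_sum fun i _ => ?_)
        rw [abs_mul]
        exact mul_le_mul_of_nonneg_right (hb i) (abs_nonneg _)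
    _ ≤ ‖b‖ * ∑' i, |f (x i)| := by
        rw [← mul_sum]
        exact mul_le_mul_of_nonneg_left ((hx f).sum_le_tsum _ fun i _ => abs_nonneg _)
          (norm_nonneg b)

theorem WUCSeries.exists_norm_partialSumCLM_le {x : ℕ → X} (hx : WUCSeries x) :
    ∃ H, ∀ n, ‖partialSumCLM x n‖ ≤ H := by
  let g : ℕ × Metric.closedBall (0 : lp (fun _ : ℕ => ℝ) ⊤) 1 → StrongDual ℝ (StrongDual ℝ X) :=
    fun q => NormedSpace.inclusionInDoubleDual ℝ X (partialSumCLM x q.1 q.2)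
  have hg : ∀ f, ∃ C, ∀ q, ‖g q f‖ ≤ C := fun f => ⟨∑' i, |f (x i)|, fun ⟨n, b, hb⟩ => by
    have hb : ‖b‖ ≤ 1 := by simpa using hb
    calc ‖g (n, ⟨b, _⟩) f‖ = |f (partialSumCLM x n b)| := Real.norm_eq_abs _
      _ ≤ ‖b‖ * ∑' i, |f (x i)| := hx.abs_apply_partialSumCLM_le f n b
      _ ≤ ∑' i, |f (x i)| :=
          mul_le_of_le_one_left (tsum_nonneg fun i => abs_nonneg _) hb⟩
  obtain ⟨C, hC⟩ := banach_steinhaus hg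
  refine ⟨max C 0, fun n => ContinuousLinearMap.opNorm_le_of_unit_norm (le_max_right _ _)
    fun b hb => ?_⟩
  calc ‖partialSumCLM x n b‖ = ‖g (n, ⟨b, by simp [hb]⟩)‖ :=
        ((NormedSpace.inclusionInDoubleDualLi ℝ).norm_map _).symm
    _ ≤ max C 0 := (hC _).trans (le_max_left _ _)

end PartialSums

section SummabilitySpace

variable {X : Type*} [NormedAddCommGroup X] [NormedSpace ℝ X] {θ : ℕ → ℕ}

theorem isClosed_nthetaSummabilitySpace [CompleteSpace X] (hθ : StrictMono θ) {x : ℕ → X}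
    (hx : WUCSeries x) : IsClosed (NthetaSummabilitySpace θ x) := by
  obtain ⟨H, hH⟩ := hx.exists_norm_partialSumCLM_le
  refine IsSeqClosed.isClosed fun A a hA hAa => ?_
  choose L hL using hA
  have hL' : ∀ m, NthetaSummable θ (fun n => partialSumCLM x n (A m)) (L m) := by
    simpa only [partialSumCLM_apply] using hL
  have hunif : TendstoUniformly (fun m n => partialSumCLM x n (A m))
      (fun n => partialSumCLM x n a) atTop := by
    have hdist : Tendsto (fun m => H * ‖A m - a‖) atTop (𝓝 0) := by
      simpa using (tendsto_iff_norm_sub_tendsto_zero.mp hAa).const_mul H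
    refine Metric.tendstoUniformly_iff.mpr fun ε hε =>
      (hdist.eventually (gt_mem_nhds hε)).mono fun m hm n => ?_
    rw [dist_comm, dist_eq_norm, ← map_sub]
    exact ((partialSumCLM x n).le_opNorm _).trans_lt
      ((mul_le_mul_of_nonneg_right (hH n) (norm_nonneg _)).trans_lt hm)
  obtain ⟨M, hM⟩ := cauchySeq_tendsto_of_complete
    (NthetaSummable.cauchySeq_of_tendstoUniformly hθ hL' hunif)
  exact ⟨M, by simpa only [partialSumCLM_apply] using
    NthetaSummable.of_tendstoUniformly hθ hL' hunif hM⟩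

theorem mem_closure_nthetaSummabilitySpace (hθ : StrictMono θ) (x : ℕ → X)
    {a : lp (fun _ : ℕ => ℝ) ⊤} (ha : Tendsto (fun i => a i) atTop (𝓝 0)) :
    a ∈ closure (NthetaSummabilitySpace θ x) := by
  refine Metric.mem_closure_iff.mpr fun ε hε => ?_
  obtain ⟨m, hm⟩ := eventually_atTop.mp (Metric.tendsto_nhds.mp ha (ε / 2) (half_pos hε))
  let b : lp (fun _ : ℕ => ℝ) ⊤ := ⟨fun i => if i < m then a i else 0, memℓp_infty ⟨‖a‖, by
    rintro _ ⟨i, rfl⟩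
    dsimp only
    split_ifs
    · exact lp.norm_apply_le_norm ENNReal.top_ne_zero a i
    · simp⟩⟩
  have hb : ∀ i, b i = if i < m then a i else 0 := fun i => rfl
  have hpartial : ∀ n ≥ m, ∑ i ∈ range n, b i • x i = ∑ i ∈ range m, a i • x i := by
    intro n hn
    rw [← sum_subset (range_subset_range.mpr hn) fun i _ hi => by
      rw [hb, if_neg (by simpa using hi), zero_smul]]
    exact sum_congr rfl fun i hi => by rw [hb, if_pos (mem_range.mp hi)]
  refine ⟨b, ⟨_, NthetaSummable.of_tendsto hθ
    (tendsto_const_nhds.congr' (eventually_atTop.mpr ⟨m, fun n hn => (hpartial n hn).symm⟩))⟩, ?_⟩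
  rw [dist_eq_norm]
  refine (lp.norm_le_of_forall_le (half_pos hε).le fun i => ?_).trans_lt (half_lt_self hε)
  rw [lp.coeFn_sub, Pi.sub_apply, hb]
  split_ifs with hi
  · simpa using (half_pos hε).le
  · simpa using (hm i (not_lt.mp hi)).le

theorem completeSpace_of_isClosed_nthetaSummabilitySpace (hθ : StrictMono θ)
    (h : ∀ x : ℕ → X, WUCSeries x → IsClosed (NthetaSummabilitySpace θ x)) :
    CompleteSpace X := by
  refine Metric.complete_of_convergent_controlled_sequences (fun N => (1 / 4 : ℝ) ^ N)
    (fun N => by positivity) fun u hu => ?_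
  have hstep : ∀ n, ‖u (n + 1) - u n‖ ≤ (1 / 4 : ℝ) ^ n := fun n => by
    simpa [dist_eq_norm] using (hu n (n + 1) n (by omega) le_rfl).le
  set x : ℕ → X := fun n => (2 : ℝ) ^ n • (u (n + 1) - u n)
  have hx : WUCSeries x := by
    refine WUCSeries.of_summable_norm (summable_geometric_two.of_nonneg_of_le
      (fun _ => norm_nonneg _) fun n => ?_)
    calc ‖x n‖ = 2 ^ n * ‖u (n + 1) - u n‖ := by simp [x, norm_smul]
      _ ≤ 2 ^ n * (1 / 4) ^ n := by gcongr; exact hstep n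
      _ = (1 / 2) ^ n := by rw [← mul_pow]; norm_num
  let a : lp (fun _ : ℕ => ℝ) ⊤ := ⟨fun n => (1 / 2 : ℝ) ^ n, memℓp_infty ⟨1, by
    rintro _ ⟨i, rfl⟩
    simpa using inv_le_one_of_one_le₀ (one_le_pow₀ (by norm_num : (1 : ℝ) ≤ 2))⟩⟩
  obtain ⟨L, hL⟩ : a ∈ NthetaSummabilitySpace θ x := (h x hx).closure_subset
    (mem_closure_nthetaSummabilitySpace hθ x
      (tendsto_pow_atTop_nhds_zero_of_lt_one (by norm_num) (by norm_num)))
  have hsum : (fun n => ∑ i ∈ range n, a i • x i) = fun n => u n - u 0 := by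
    funext n
    rw [← sum_range_sub]
    refine sum_congr rfl fun i _ => ?_
    simp [a, x, smul_smul]
  have hcauchy : CauchySeq fun n => u n - u 0 := Metric.cauchySeq_iff.mpr fun ε hε => by
    obtain ⟨N, hN⟩ := exists_pow_lt_of_lt_one hε (by norm_num : (1 / 4 : ℝ) < 1)
    exact ⟨N, fun m hm n hn => by simpa only [dist_sub_right] using (hu N m n hm hn).trans hN⟩
  rw [hsum] at hL
  refine ⟨L + u 0, ?_⟩
  simpa using (hL.tendsto_of_cauchySeq hθ hcauchy).add_const (u 0)

end SummabilitySpace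

/-- A normed space is complete iff the `N_θ`-summability space of every wuC series is complete. -/
theorem completeSpace_iff_nthetaSummabilitySpace_complete {X : Type*} [NormedAddCommGroup X]
    [NormedSpace ℝ X] (θ : ℕ → ℕ) (hθ : IsLacunary θ) :
    CompleteSpace X ↔
      ∀ x : ℕ → X, WUCSeries x → IsComplete (NthetaSummabilitySpace θ x) := by
  have hmono : StrictMono θ := hθ.2.1
  constructor
  · intro _ x hx
    exact (isClosed_nthetaSummabilitySpace hmono hx).isComplete
  · intro h
    exact completeSpace_of_isClosed_nthetaSummabilitySpace hmono fun x hx => (h x hx).isClosed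
end

section
/- Let X be a real normed space, θ = (k_r) a lacunary sequence, (S_N) a sequence in X, and x** an element of the bidual X** that does not belong to the image of X under the canonical embedding J : X → X**. Suppose that y*(S_N) → x**(y*) as N → ∞ for every y* ∈ X*. Then (S_N) is not N_θ-summable to any L ∈ X. -/
open Filter Finset
open scoped Classical

/-!
If `(S_N)` were `N_θ`-summable to `L`, then in each block `I_r` some term `S_{n_r}` is at least
as close to `L` as the block average, so `S_{n_r} → L` in norm along `n_r → ∞`. Testing against
`y* ∈ X*` gives `y*(S_{n_r}) → y*(L)`, while the hypothesis gives `y*(S_{n_r}) → x**(y*)`;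
hence `x** = J L`, contradicting `x** ∉ J(X)`.
-/

open scoped BigOperators Topology
open NormedSpace

lemma one_div_sub_mul_sum_Ioc_eq_expect {θ : ℕ → ℕ} (hθ : Monotone θ) (f : ℕ → ℝ) (r : ℕ) :
    (1 / (θ (r + 1) - θ r : ℝ)) * ∑ k ∈ Ioc (θ r) (θ (r + 1)), f k =
      𝔼 k ∈ Ioc (θ r) (θ (r + 1)), f k := by
  rw [expect_eq_sum_div_card, Nat.card_Ioc, Nat.cast_sub (hθ r.le_succ), one_div_mul_eq_div]

lemma NthetaSummable.exists_tendsto_comp {X : Type*} [NormedAddCommGroup X] {θ : ℕ → ℕ}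
    {S : ℕ → X} {L : X} (hθ : StrictMono θ) (h : NthetaSummable θ S L) :
    ∃ n : ℕ → ℕ, Tendsto n atTop atTop ∧ Tendsto (S ∘ n) atTop (𝓝 L) := by
  have hmem : ∀ r, ∃ k ∈ Ioc (θ r) (θ (r + 1)),
      ‖S k - L‖ ≤ 𝔼 k ∈ Ioc (θ r) (θ (r + 1)), ‖S k - L‖ := fun r =>
    exists_le_of_expect_le ⟨θ (r + 1), right_mem_Ioc.2 (hθ r.lt_succ_self)⟩ le_rfl
  choose n hn hle using hmem
  refine ⟨n, tendsto_atTop_mono (fun r => (mem_Ioc.1 (hn r)).1.le) hθ.tendsto_atTop, ?_⟩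
  rw [tendsto_iff_norm_sub_tendsto_zero]
  refine squeeze_zero (fun r => norm_nonneg _) (fun r => (hle r).trans_eq ?_) h
  exact (one_div_sub_mul_sum_Ioc_eq_expect hθ.monotone _ r).symm

lemma inclusionInDoubleDual_eq_of_tendsto_comp {𝕜 X : Type*} [NontriviallyNormedField 𝕜]
    [NormedAddCommGroup X] [NormedSpace 𝕜 X] {S : ℕ → X} {L : X}
    {xss : StrongDual 𝕜 (StrongDual 𝕜 X)}
    (hconv : ∀ y : StrongDual 𝕜 X, Tendsto (fun N => y (S N)) atTop (𝓝 (xss y)))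
    {n : ℕ → ℕ} (hn : Tendsto n atTop atTop) (hSn : Tendsto (S ∘ n) atTop (𝓝 L)) :
    inclusionInDoubleDual 𝕜 X L = xss := by
  ext y
  exact tendsto_nhds_unique ((y.continuous.tendsto L).comp hSn) ((hconv y).comp hn)

open NormedSpace in
/-- If `y* (S N) → x** (y*)` for every `y* ∈ X*`, where `x**` is an element of the bidual
not in the canonical image of `X`, then `(S N)` is not `N_θ`-summable to any `L ∈ X`. -/
theorem not_nthetaSummable_of_weakStar_tendsto_bidual {X : Type*} [NormedAddCommGroup X]
    [NormedSpace ℝ X] (θ : ℕ → ℕ) (hθ : IsLacunary θ) (S : ℕ → X)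
    (xss : StrongDual ℝ (StrongDual ℝ X)) (hxss : xss ∉ Set.range (inclusionInDoubleDual ℝ X))
    (hconv : ∀ y : StrongDual ℝ X, Tendsto (fun N => y (S N)) atTop (nhds (xss y))) :
    ∀ L : X, ¬ NthetaSummable θ S L := by
  intro L hL
  obtain ⟨n, hn, hSn⟩ := hL.exists_tendsto_comp hθ.2.1
  exact hxss ⟨L, inclusionInDoubleDual_eq_of_tendsto_comp hconv hn hSn⟩
end
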